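/- With α_t = (H+1)/(H+t) and α_t^i = α_i ∏_{j=i+1}^t (1 - α_j), for every integer t ≥ 1, max_{1 ≤ i ≤ t} α_t^i ≤ 2H/t and Σ_{i=1}^t (α_t^i)² ≤ 2H/t. -/

import Mathlib

open Real Finset

/-- Learning rate `α_t = (H+1)/(H+t)`. -/
noncomputable def lr (H t : ℕ) : ℝ := (H + 1) / (H + t)

/-- Weight `α_t^i = α_i ∏_{j=i+1}^t (1 - α_j)`. -/
noncomputable def lrWeight (H i t : ℕ) : ℝ :=
  lr H i * ∏ j ∈ Finset.Icc (i + 1) t, (1 - lr H j)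

/-!
The weights `α_t^i` are the coefficients of the recursion `x_t = (1 - α_t) x_{t-1} + α_t y_t`, so
they sum to one because `α_1 = 1`. They also increase in `i`, since
`α_i (1 - α_{i+1}) ≤ α_{i+1}`, hence each is at most `α_t^t = α_t ≤ 2H/t`, and
`∑ (α_t^i)² ≤ α_t ∑ α_t^i = α_t`.
-/

noncomputable def rateWeight (α : ℕ → ℝ) (i t : ℕ) : ℝ :=
  α i * ∏ j ∈ Icc (i + 1) t, (1 - α j)

section rateWeight

variable {α : ℕ → ℝ} {i t : ℕ}

@[simp]
theorem rateWeight_self : rateWeight α i i = α i := by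
  simp [rateWeight]

theorem rateWeight_succ (hit : i ≤ t) :
    rateWeight α i (t + 1) = rateWeight α i t * (1 - α (t + 1)) := by
  rw [rateWeight, rateWeight, prod_Icc_succ_top (by omega), mul_assoc]

theorem rateWeight_nonneg (hα₀ : ∀ j, 0 ≤ α j) (hα₁ : ∀ j ≥ 1, α j ≤ 1) :
    0 ≤ rateWeight α i t :=
  mul_nonneg (hα₀ i) <| prod_nonneg fun j hj ↦
    sub_nonneg.2 (hα₁ j (by simp only [mem_Icc] at hj; omega))

theorem sum_rateWeight_eq_one (hα_one : α 1 = 1) (ht : 1 ≤ t) :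
    ∑ i ∈ Icc 1 t, rateWeight α i t = 1 := by
  induction t, ht using Nat.le_induction with
  | base => simp [hα_one]
  | succ t ht ih =>
    rw [sum_Icc_succ_top (by omega), rateWeight_self,
      sum_congr rfl fun i hi ↦ rateWeight_succ (mem_Icc.1 hi).2, ← sum_mul, ih]
    ring

theorem rateWeight_le (hα₁ : ∀ j ≥ 1, α j ≤ 1)
    (hstep : ∀ j, α j * (1 - α (j + 1)) ≤ α (j + 1)) (hit : i ≤ t) :
    rateWeight α i t ≤ α t := by
  induction t, hit using Nat.le_induction with
  | base => rw [rateWeight_self]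
  | succ t hit ih =>
    rw [rateWeight_succ hit]
    exact (mul_le_mul_of_nonneg_right ih (sub_nonneg.2 (hα₁ (t + 1) (by omega)))).trans
      (hstep t)

theorem sum_rateWeight_sq_le (hα_one : α 1 = 1) (hα₀ : ∀ j, 0 ≤ α j)
    (hα₁ : ∀ j ≥ 1, α j ≤ 1) (hstep : ∀ j, α j * (1 - α (j + 1)) ≤ α (j + 1))
    (ht : 1 ≤ t) :
    ∑ i ∈ Icc 1 t, rateWeight α i t ^ 2 ≤ α t :=
  calc ∑ i ∈ Icc 1 t, rateWeight α i t ^ 2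
      ≤ ∑ i ∈ Icc 1 t, α t * rateWeight α i t := sum_le_sum fun i hi ↦ by
        rw [sq]
        exact mul_le_mul_of_nonneg_right (rateWeight_le hα₁ hstep (mem_Icc.1 hi).2)
          (rateWeight_nonneg hα₀ hα₁)
    _ = α t := by rw [← mul_sum, sum_rateWeight_eq_one hα_one ht, mul_one]

end rateWeight

theorem lrWeight_eq_rateWeight (H : ℕ) : lrWeight H = rateWeight (lr H) := rfl

theorem lr_one (H : ℕ) : lr H 1 = 1 := by
  rw [lr, Nat.cast_one, div_self (by positivity)]

theorem lr_nonneg (H j : ℕ) : 0 ≤ lr H j := by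
  unfold lr; positivity

theorem lr_le_one (H : ℕ) {j : ℕ} (hj : 1 ≤ j) : lr H j ≤ 1 := by
  have : (1 : ℝ) ≤ j := by exact_mod_cast hj
  exact div_le_one_of_le₀ (by linarith) (by positivity)

theorem one_sub_lr_succ (H t : ℕ) : 1 - lr H (t + 1) = t / (H + t + 1) := by
  rw [lr, eq_div_iff (by positivity)]
  push_cast
  field_simp
  ring

theorem lr_mul_one_sub_lr_succ_le (H t : ℕ) : lr H t * (1 - lr H (t + 1)) ≤ lr H (t + 1) := by
  have hfrac : (t : ℝ) / (H + t) ≤ 1 :=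
    div_le_one_of_le₀ (le_add_of_nonneg_left H.cast_nonneg) (by positivity)
  calc lr H t * (1 - lr H (t + 1))
      = lr H (t + 1) * (t / (H + t)) := by
        rw [one_sub_lr_succ, lr, lr]; push_cast; ring
    _ ≤ lr H (t + 1) := mul_le_of_le_one_right (lr_nonneg H _) hfrac

theorem lr_le_two_mul_div {H t : ℕ} (hH : 1 ≤ H) (ht : 1 ≤ t) : lr H t ≤ 2 * H / t := by
  have hH' : (1 : ℝ) ≤ H := by exact_mod_cast hH
  have ht' : (1 : ℝ) ≤ t := by exact_mod_cast ht
  rw [lr, div_le_div_iff₀ (by positivity) (by positivity)]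
  nlinarith

theorem lrWeight_max_and_sq_sum (H : ℕ) (hH : 1 ≤ H) (t : ℕ) (ht : 1 ≤ t) :
    (∀ i ∈ Finset.Icc 1 t, lrWeight H i t ≤ 2 * H / t) ∧
      ∑ i ∈ Finset.Icc 1 t, (lrWeight H i t) ^ 2 ≤ 2 * H / t := by
  rw [lrWeight_eq_rateWeight]
  have hα₁ : ∀ j ≥ 1, lr H j ≤ 1 := fun _ ↦ lr_le_one H
  have hstep := lr_mul_one_sub_lr_succ_le H
  refine ⟨fun i hi ↦ ?_, ?_⟩
  · exact (rateWeight_le hα₁ hstep (mem_Icc.1 hi).2).trans (lr_le_two_mul_div hH ht)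
  · exact (sum_rateWeight_sq_le (lr_one H) (lr_nonneg H) hα₁ hstep ht).trans
      (lr_le_two_mul_div hH ht)
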